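/- Let d : YoungDiagram → ℕ count standard Young tableaux. Then for every Young diagram λ the set {Λ : YoungDiagram | λ ⋖ Λ} is finite and ∑ over Λ with λ ⋖ Λ of d Λ equals (λ.card + 1) * d λ. -/

import Mathlib

/-- `CoversBelow μ lam` (written `μ ⋖ lam` informally): `μ ≤ lam` and
`μ.card + 1 = lam.card`. -/
def CoversBelow (μ lam : YoungDiagram) : Prop :=
  μ ≤ lam ∧ μ.card + 1 = lam.card

/-- `d : YoungDiagram → ℕ` counts standard Young tableaux:
`d ⊥ = 1` and, for every `lam ≠ ⊥`, `d lam` is the sum of `d μ` over the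
(finite) set of diagrams `μ` covered by `lam`. -/
def CountsSYT (d : YoungDiagram → ℕ) : Prop :=
  d ⊥ = 1 ∧ ∀ lam : YoungDiagram, lam ≠ ⊥ →
    d lam = ∑ᶠ μ ∈ {μ : YoungDiagram | CoversBelow μ lam}, d μ


/-! Young's lattice is a differential poset. A diagram has one more upper cover than lower
covers, since addable and removable corners alternate along its rim; and two distinct diagrams
of the same size have a common upper cover iff they have a common lower cover, namely their
join and meet. Hence, for any `f`, summing `f` over the up-then-down paths of length two from
`lam` gives the sum over the down-then-up paths plus `f lam`. Applied to `f = d`, whose value at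
each upper cover is the sum over its lower covers, this yields the claim by induction on the size
of `lam`. -/

namespace YoungDiagram

open Finset

instance : DecidableEq YoungDiagram := fun μ ν =>
  decidable_of_iff (μ.cells = ν.cells) YoungDiagram.ext_iff.symm

variable {lam μ ν Lam : YoungDiagram} {i : ℕ}

theorem card_lt_card (h : μ < ν) : μ.card < ν.card :=
  Finset.card_lt_card (cells_ssubset_iff.2 h)

theorem eq_of_le_of_card_le (h : μ ≤ ν) (hcard : ν.card ≤ μ.card) : μ = ν :=
  YoungDiagram.ext (eq_of_subset_of_card_le (cells_subset_iff.2 h) hcard)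

theorem card_sup_add_card_inf (μ ν : YoungDiagram) :
    (μ ⊔ ν).card + (μ ⊓ ν).card = μ.card + ν.card :=
  card_union_add_card_inter μ.cells ν.cells

theorem card_bot : (⊥ : YoungDiagram).card = 0 := rfl

def IsAddableRow (lam : YoungDiagram) (i : ℕ) : Prop :=
  i = 0 ∨ lam.rowLen i < lam.rowLen (i - 1)

def IsRemovableRow (lam : YoungDiagram) (i : ℕ) : Prop :=
  lam.rowLen (i + 1) < lam.rowLen i

instance : DecidablePred lam.IsAddableRow := fun i =>
  inferInstanceAs (Decidable (i = 0 ∨ _))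

instance : DecidablePred lam.IsRemovableRow := fun _ =>
  inferInstanceAs (Decidable (_ < _))

theorem isAddableRow_zero : lam.IsAddableRow 0 := .inl rfl

theorem isAddableRow_succ_iff : lam.IsAddableRow (i + 1) ↔ lam.IsRemovableRow i := by
  simp [IsAddableRow, IsRemovableRow]

theorem IsRemovableRow.lt_colLen (hi : lam.IsRemovableRow i) : i < lam.colLen 0 :=
  mem_iff_lt_colLen.1 (mem_iff_lt_rowLen.2 (by unfold IsRemovableRow at hi; omega))

theorem IsAddableRow.le_colLen (hi : lam.IsAddableRow i) : i ≤ lam.colLen 0 := by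
  cases i with
  | zero => exact Nat.zero_le _
  | succ j => exact (isAddableRow_succ_iff.1 hi).lt_colLen

def addableRows (lam : YoungDiagram) : Finset ℕ :=
  (range (lam.colLen 0 + 1)).filter lam.IsAddableRow

def removableRows (lam : YoungDiagram) : Finset ℕ :=
  (range (lam.colLen 0)).filter lam.IsRemovableRow

theorem mem_addableRows : i ∈ lam.addableRows ↔ lam.IsAddableRow i := by
  simpa [addableRows, Nat.lt_succ_iff] using fun hi => hi.le_colLen

theorem mem_removableRows : i ∈ lam.removableRows ↔ lam.IsRemovableRow i := by
  simpa [removableRows] using fun hi => hi.lt_colLen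

/-- Row `0` is always addable, and row `i + 1` is addable exactly when row `i` is removable. -/
theorem card_addableRows (lam : YoungDiagram) :
    lam.addableRows.card = lam.removableRows.card + 1 := by
  simp only [addableRows, removableRows, card_filter, sum_range_succ', isAddableRow_succ_iff,
    if_pos isAddableRow_zero]

def addCell (lam : YoungDiagram) (i : ℕ) (hi : lam.IsAddableRow i) : YoungDiagram where
  cells := insert (i, lam.rowLen i) lam.cells
  isLowerSet := by
    rintro ⟨a, b⟩ ⟨x, y⟩ hle hab
    obtain ⟨hxa, hyb⟩ := Prod.mk_le_mk.1 hle
    simp only [coe_insert, Set.mem_insert_iff, mem_coe, mem_cells, Prod.mk.injEq] at hab ⊢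
    rcases hab with ⟨rfl, rfl⟩ | hab
    · by_cases hcorner : x = a ∧ y = lam.rowLen a
      · exact .inl hcorner
      refine .inr (mem_iff_lt_rowLen.2 ?_)
      rcases hxa.lt_or_eq with hlt | rfl
      · have hrow := lam.rowLen_anti x (a - 1) (by omega)
        have : lam.rowLen a < lam.rowLen (a - 1) := hi.resolve_left (by omega)
        omega
      · omega
    · exact .inr (lam.up_left_mem hxa hyb hab)

def removeCell (lam : YoungDiagram) (i : ℕ) (hi : lam.IsRemovableRow i) : YoungDiagram where
  cells := lam.cells.erase (i, lam.rowLen i - 1)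
  isLowerSet := by
    rintro ⟨a, b⟩ ⟨x, y⟩ hle hab
    obtain ⟨hxa, hyb⟩ := Prod.mk_le_mk.1 hle
    simp only [coe_erase, Set.mem_sdiff, mem_coe, mem_cells, Set.mem_singleton_iff,
      Prod.mk.injEq] at hab ⊢
    refine ⟨lam.up_left_mem hxa hyb hab.1, ?_⟩
    rintro ⟨rfl, rfl⟩
    have hb := mem_iff_lt_rowLen.1 hab.1
    rcases Nat.lt_or_ge a (x + 1) with ha | ha
    · exact hab.2 ⟨by omega, by have := lam.rowLen_anti x a hxa; omega⟩
    · have := lam.rowLen_anti (x + 1) a ha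
      unfold IsRemovableRow at hi
      omega

theorem coversBelow_addCell (hi : lam.IsAddableRow i) : CoversBelow lam (lam.addCell i hi) :=
  ⟨cells_subset_iff.1 (subset_insert _ _),
    (card_insert_of_notMem (by simp [mem_iff_lt_rowLen])).symm⟩

theorem removeCell_coversBelow (hi : lam.IsRemovableRow i) :
    CoversBelow (lam.removeCell i hi) lam := by
  have hmem : (i, lam.rowLen i - 1) ∈ lam.cells := by
    rw [mem_cells, mem_iff_lt_rowLen]; unfold IsRemovableRow at hi; omega
  exact ⟨cells_subset_iff.1 (erase_subset _ _), card_erase_add_one hmem⟩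

theorem eq_of_addCell_eq {i' : ℕ} {hi : lam.IsAddableRow i} {hi' : lam.IsAddableRow i'}
    (h : lam.addCell i hi = lam.addCell i' hi') : i = i' := by
  have hcells : insert (i, lam.rowLen i) lam.cells = insert (i', lam.rowLen i') lam.cells :=
    congrArg cells h
  have hmem : (i, lam.rowLen i) ∈ insert (i', lam.rowLen i') lam.cells :=
    hcells ▸ mem_insert_self _ _
  rcases mem_insert.1 hmem with heq | hmem
  · exact congrArg Prod.fst heq
  · exact absurd (mem_iff_lt_rowLen.1 hmem) (lt_irrefl _)

theorem eq_of_removeCell_eq {i' : ℕ} {hi : lam.IsRemovableRow i}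
    {hi' : lam.IsRemovableRow i'} (h : lam.removeCell i hi = lam.removeCell i' hi') : i = i' := by
  have hcells : lam.cells.erase (i, lam.rowLen i - 1) = lam.cells.erase (i', lam.rowLen i' - 1) :=
    congrArg cells h
  by_contra hne
  have hmem : (i, lam.rowLen i - 1) ∈ lam.cells.erase (i', lam.rowLen i' - 1) := by
    refine mem_erase.2 ⟨fun heq => hne (congrArg Prod.fst heq), ?_⟩
    rw [mem_cells, mem_iff_lt_rowLen]; unfold IsRemovableRow at hi; omega
  exact (mem_erase.1 (hcells ▸ hmem)).1 rfl
theorem _root_.CoversBelow.exists_eq_insert (h : CoversBelow μ lam) :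
    ∃ c ∉ μ, lam.cells = insert c μ.cells := by
  have hsub : μ.cells ⊆ lam.cells := cells_subset_iff.2 h.1
  obtain ⟨c, hc⟩ : ∃ c, lam.cells \ μ.cells = {c} := by
    rw [← card_eq_one, card_sdiff_of_subset hsub]
    have : μ.cells.card + 1 = lam.cells.card := h.2
    omega
  have hcmem : c ∈ lam.cells \ μ.cells := hc ▸ mem_singleton_self c
  refine ⟨c, (mem_sdiff.1 hcmem).2, ?_⟩
  rw [← union_sdiff_of_subset hsub, hc, insert_eq, union_comm]

theorem _root_.CoversBelow.exists_eq_addCell (h : CoversBelow lam Lam) :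
    ∃ i, ∃ hi : lam.IsAddableRow i, lam.addCell i hi = Lam := by
  obtain ⟨⟨i, j⟩, hnew, hLam⟩ := h.exists_eq_insert
  have hmemLam : (i, j) ∈ Lam := by rw [← mem_cells, hLam]; exact mem_insert_self _ _
  have hold : ∀ x ∈ Lam, x ≠ (i, j) → x ∈ lam := fun x hx hne => by
    rw [← mem_cells, hLam] at hx
    exact (mem_insert.1 hx).resolve_left hne
  obtain rfl : j = lam.rowLen i := by
    refine le_antisymm (not_lt.1 fun hlt => ?_) (not_lt.1 (hnew ∘ mem_iff_lt_rowLen.2))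
    have := hold _ (Lam.up_left_mem le_rfl hlt.le hmemLam) (by simp [hlt.ne])
    exact lt_irrefl _ (mem_iff_lt_rowLen.1 this)
  have hi : lam.IsAddableRow i := by
    rcases i with _ | i
    · exact isAddableRow_zero
    · refine .inr (mem_iff_lt_rowLen.1 (hold _ ?_ (by simp)))
      exact Lam.up_left_mem (Nat.sub_le _ _) le_rfl hmemLam
  exact ⟨i, hi, YoungDiagram.ext hLam.symm⟩

theorem _root_.CoversBelow.exists_eq_removeCell (h : CoversBelow μ lam) :
    ∃ i, ∃ hi : lam.IsRemovableRow i, lam.removeCell i hi = μ := by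
  obtain ⟨⟨i, j⟩, hnew, hlam⟩ := h.exists_eq_insert
  have hμ : μ.cells = lam.cells.erase (i, j) := by
    rw [hlam, erase_insert (by simpa using hnew)]
  have hmem : (i, j) ∈ lam := by rw [← mem_cells, hlam]; exact mem_insert_self _ _
  have hmax : ∀ x ∈ lam, (i, j) ≤ x → x = (i, j) := fun x hx hle => by
    by_contra hne
    have : x ∈ μ := by rw [← mem_cells, hμ]; exact mem_erase.2 ⟨hne, hx⟩
    exact hnew (μ.up_left_mem hle.1 hle.2 this)
  have hj := mem_iff_lt_rowLen.1 hmem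
  have hright : lam.rowLen i ≤ j + 1 := not_lt.1 fun hlt => by
    simpa using hmax _ (mem_iff_lt_rowLen.2 hlt) ⟨le_rfl, Nat.le_succ j⟩
  have hbelow : lam.rowLen (i + 1) ≤ j := not_lt.1 fun hlt => by
    simpa using hmax _ (mem_iff_lt_rowLen.2 hlt) ⟨Nat.le_succ i, le_rfl⟩
  obtain rfl : j = lam.rowLen i - 1 := by omega
  exact ⟨i, by unfold IsRemovableRow; omega, YoungDiagram.ext hμ.symm⟩

def upCovers (lam : YoungDiagram) : Finset YoungDiagram :=
  lam.addableRows.attach.image fun r : {i // i ∈ lam.addableRows} =>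
    lam.addCell r (mem_addableRows.1 r.2)

def downCovers (lam : YoungDiagram) : Finset YoungDiagram :=
  lam.removableRows.attach.image fun r : {i // i ∈ lam.removableRows} =>
    lam.removeCell r (mem_removableRows.1 r.2)

@[simp]
theorem mem_upCovers : Lam ∈ lam.upCovers ↔ CoversBelow lam Lam := by
  simp only [upCovers, mem_image, mem_attach, true_and, Subtype.exists, mem_addableRows]
  exact ⟨fun ⟨_, hi, h⟩ => h ▸ coversBelow_addCell hi, CoversBelow.exists_eq_addCell⟩

@[simp]
theorem mem_downCovers : μ ∈ lam.downCovers ↔ CoversBelow μ lam := by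
  simp only [downCovers, mem_image, mem_attach, true_and, Subtype.exists, mem_removableRows]
  exact ⟨fun ⟨_, hi, h⟩ => h ▸ removeCell_coversBelow hi, CoversBelow.exists_eq_removeCell⟩

theorem coe_upCovers (lam : YoungDiagram) :
    (lam.upCovers : Set YoungDiagram) = {Lam | CoversBelow lam Lam} :=
  Set.ext fun _ => mem_upCovers

theorem coe_downCovers (lam : YoungDiagram) :
    (lam.downCovers : Set YoungDiagram) = {μ | CoversBelow μ lam} :=
  Set.ext fun _ => mem_downCovers

theorem card_upCovers (lam : YoungDiagram) : lam.upCovers.card = lam.downCovers.card + 1 := by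
  rw [upCovers, downCovers, card_image_of_injective, card_image_of_injective, card_attach,
    card_attach, card_addableRows]
  · exact fun i i' h => Subtype.ext (eq_of_removeCell_eq h)
  · exact fun i i' h => Subtype.ext (eq_of_addCell_eq h)

end YoungDiagram

namespace CoversBelow

open YoungDiagram

variable {lam μ ν Lam : YoungDiagram}

theorem sup_eq (hlam : CoversBelow lam Lam) (hμ : CoversBelow μ Lam) (hne : lam ≠ μ) :
    lam ⊔ μ = Lam := by
  have hcard : μ.card = lam.card := by have := hlam.2; have := hμ.2; omega
  have hlt : lam < lam ⊔ μ := lt_of_le_of_ne le_sup_left fun h =>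
    hne (eq_of_le_of_card_le (h ▸ le_sup_right) hcard.ge).symm
  have := card_lt_card hlt
  exact eq_of_le_of_card_le (sup_le hlam.1 hμ.1) (by have := hlam.2; omega)

theorem inf_eq (hlam : CoversBelow ν lam) (hμ : CoversBelow ν μ) (hne : lam ≠ μ) :
    lam ⊓ μ = ν := by
  have hcard : μ.card = lam.card := by have := hlam.2; have := hμ.2; omega
  have hlt : lam ⊓ μ < lam := lt_of_le_of_ne inf_le_left fun h =>
    hne (eq_of_le_of_card_le (h ▸ inf_le_right) hcard.le)
  have := card_lt_card hlt
  exact (eq_of_le_of_card_le (le_inf hlam.1 hμ.1) (by have := hlam.2; omega)).symm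

theorem sup_iff_inf (hcard : lam.card = μ.card) :
    CoversBelow lam (lam ⊔ μ) ↔ CoversBelow (lam ⊓ μ) lam := by
  have := card_sup_add_card_inf lam μ
  exact ⟨fun h => ⟨inf_le_left, by have := h.2; omega⟩,
    fun h => ⟨le_sup_left, by have := h.2; omega⟩⟩

theorem exists_above_iff_exists_below (hne : lam ≠ μ) :
    (∃ Lam, CoversBelow lam Lam ∧ CoversBelow μ Lam) ↔
      ∃ ν, CoversBelow ν lam ∧ CoversBelow ν μ := by
  constructor
  · rintro ⟨Lam, hlam, hμ⟩
    have hcard : lam.card = μ.card := by have := hlam.2; have := hμ.2; omega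
    obtain rfl := sup_eq hlam hμ hne
    refine ⟨lam ⊓ μ, (sup_iff_inf hcard).1 hlam, ?_⟩
    rw [inf_comm]
    exact (sup_iff_inf hcard.symm).1 (sup_comm lam μ ▸ hμ)
  · rintro ⟨ν, hlam, hμ⟩
    have hcard : lam.card = μ.card := by have := hlam.2; have := hμ.2; omega
    obtain rfl := inf_eq hlam hμ hne
    refine ⟨lam ⊔ μ, (sup_iff_inf hcard).2 hlam, ?_⟩
    rw [sup_comm]
    exact (sup_iff_inf hcard.symm).2 (inf_comm lam μ ▸ hμ)

end CoversBelow

namespace YoungDiagram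

open Finset

variable {M : Type*} [AddCommMonoid M]

theorem sum_upCovers_sum_downCovers_erase (f : YoungDiagram → M) (lam : YoungDiagram) :
    ∑ Lam ∈ lam.upCovers, ∑ μ ∈ Lam.downCovers.erase lam, f μ =
      ∑ ν ∈ lam.downCovers, ∑ μ ∈ ν.upCovers.erase lam, f μ := by
  have hup : (lam.upCovers : Set YoungDiagram).PairwiseDisjoint (·.downCovers.erase lam) := by
    intro Lam₁ h₁ Lam₂ h₂ hne
    refine disjoint_left.2 fun μ hμ₁ hμ₂ => hne ?_
    simp only [mem_coe, mem_upCovers, mem_erase, mem_downCovers] at h₁ h₂ hμ₁ hμ₂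
    exact (h₁.sup_eq hμ₁.2 hμ₁.1.symm).symm.trans (h₂.sup_eq hμ₂.2 hμ₂.1.symm)
  have hdown : (lam.downCovers : Set YoungDiagram).PairwiseDisjoint (·.upCovers.erase lam) := by
    intro ν₁ h₁ ν₂ h₂ hne
    refine disjoint_left.2 fun μ hμ₁ hμ₂ => hne ?_
    simp only [mem_coe, mem_downCovers, mem_erase, mem_upCovers] at h₁ h₂ hμ₁ hμ₂
    exact (h₁.inf_eq hμ₁.2 hμ₁.1.symm).symm.trans (h₂.inf_eq hμ₂.2 hμ₂.1.symm)
  rw [← sum_biUnion hup, ← sum_biUnion hdown]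
  refine sum_congr (ext fun μ => ?_) fun _ _ => rfl
  rcases eq_or_ne μ lam with rfl | hne
  · simp
  · simpa [hne] using CoversBelow.exists_above_iff_exists_below hne.symm

theorem sum_upCovers_sum_downCovers (f : YoungDiagram → M) (lam : YoungDiagram) :
    ∑ Lam ∈ lam.upCovers, ∑ μ ∈ Lam.downCovers, f μ =
      ∑ ν ∈ lam.downCovers, ∑ μ ∈ ν.upCovers, f μ + f lam := by
  have hup : ∀ Lam ∈ lam.upCovers, ∑ μ ∈ Lam.downCovers, f μ =
      f lam + ∑ μ ∈ Lam.downCovers.erase lam, f μ := fun Lam hLam =>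
    (add_sum_erase _ f (mem_downCovers.2 (mem_upCovers.1 hLam))).symm
  have hdown : ∀ ν ∈ lam.downCovers, ∑ μ ∈ ν.upCovers, f μ =
      f lam + ∑ μ ∈ ν.upCovers.erase lam, f μ := fun ν hν =>
    (add_sum_erase _ f (mem_upCovers.2 (mem_downCovers.1 hν))).symm
  rw [sum_congr rfl hup, sum_congr rfl hdown, sum_add_distrib, sum_add_distrib, sum_const,
    sum_const, card_upCovers, succ_nsmul, sum_upCovers_sum_downCovers_erase]
  abel

end YoungDiagram

namespace CountsSYT

open YoungDiagram Finset

variable {d : YoungDiagram → ℕ}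

theorem eq_sum_downCovers (hd : CountsSYT d) {lam : YoungDiagram} (hlam : lam ≠ ⊥) :
    d lam = ∑ μ ∈ lam.downCovers, d μ := by
  rw [hd.2 lam hlam, ← coe_downCovers, finsum_mem_coe_finset]

theorem sum_upCovers (hd : CountsSYT d) (lam : YoungDiagram) :
    ∑ Lam ∈ lam.upCovers, d Lam = (lam.card + 1) * d lam := by
  have hup : ∀ Lam ∈ lam.upCovers, d Lam = ∑ μ ∈ Lam.downCovers, d μ := fun Lam hLam =>
    hd.eq_sum_downCovers fun hbot => by simpa [hbot, card_bot] using (mem_upCovers.1 hLam).2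
  have hdown : ∀ ν ∈ lam.downCovers, ∑ μ ∈ ν.upCovers, d μ = lam.card * d ν := fun ν hν => by
    rw [hd.sum_upCovers ν, (mem_downCovers.1 hν).2]
  have hrec : lam.card * ∑ ν ∈ lam.downCovers, d ν = lam.card * d lam := by
    rcases eq_or_ne lam ⊥ with rfl | hbot
    · rw [card_bot, zero_mul, zero_mul]
    · rw [← hd.eq_sum_downCovers hbot]
  calc ∑ Lam ∈ lam.upCovers, d Lam
      = ∑ Lam ∈ lam.upCovers, ∑ μ ∈ Lam.downCovers, d μ := sum_congr rfl hup
    _ = ∑ ν ∈ lam.downCovers, ∑ μ ∈ ν.upCovers, d μ + d lam := sum_upCovers_sum_downCovers d lam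
    _ = lam.card * ∑ ν ∈ lam.downCovers, d ν + d lam := by rw [sum_congr rfl hdown, mul_sum]
    _ = (lam.card + 1) * d lam := by rw [hrec, add_one_mul]
termination_by lam.card
decreasing_by have := (mem_downCovers.1 hν).2; omega

end CountsSYT

theorem sum_dim_covers (d : YoungDiagram → ℕ) (hd : CountsSYT d)
    (lam : YoungDiagram) :
    {Lam : YoungDiagram | CoversBelow lam Lam}.Finite ∧
      ∑ᶠ Lam ∈ {Lam : YoungDiagram | CoversBelow lam Lam}, d Lam =
        (lam.card + 1) * d lam := by
  rw [← YoungDiagram.coe_upCovers, finsum_mem_coe_finset]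
  exact ⟨lam.upCovers.finite_toSet, hd.sum_upCovers lam⟩
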